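/- arXiv:2212.14666 — 2 statements merged into one kernel-verified Lean document; each statement's English description precedes it below -/
import Mathlib

section
/- For every k ≥ 1, the two-variable exponential generating function of the numbers T(n,k,r) satisfies, as an identity of formal power series in ℚ[[x,y]]: ∑_{n,r≥0} T(n,k,r) (x^n/n!) y^r = exp^{(k)}(x,y). -/
open Finset

/-- Stirling numbers of the second kind: the number of partitions (equivalence
relations) of an `n`-element set into `r` nonempty blocks. -/
noncomputable def stirS2 (n r : ℕ) : ℕ :=
  Nat.card {p : Setoid (Fin n) // Nat.card (Quotient p) = r}

/-- Signed Stirling numbers of the first kind, defined by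
`x(x-1)⋯(x-n+1) = ∑_{r=0}^{n} s(n,r) xʳ`. -/
noncomputable def stirS1 (n r : ℕ) : ℤ :=
  (∏ i ∈ Finset.range n, (Polynomial.X - Polynomial.C (i : ℤ))).coeff r

/-- `Tnum n k r = T(n,k,r) = ∑_{n ≥ i_1 ≥ … ≥ i_{k-1} ≥ r} ∏_{j=1}^{k} S(i_{j-1}, i_j)`
(with `i_0 = n`, `i_k = r`), written via the equivalent recursion on `k`. -/
noncomputable def Tnum : ℕ → ℕ → ℕ → ℕ
  | n, 0, r => if n = r then 1 else 0
  | n, k + 1, r => ∑ m ∈ Finset.Icc r n, stirS2 n m * Tnum m k r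

/-- `tnum n k r = t(n,k,r) = ∑_{n ≥ i_1 ≥ … ≥ i_{k-1} ≥ r} ∏_{j=1}^{k} s(i_{j-1}, i_j)`
(with `i_0 = n`, `i_k = r`), written via the equivalent recursion on `k`. -/
noncomputable def tnum : ℕ → ℕ → ℕ → ℤ
  | n, 0, r => if n = r then 1 else 0
  | n, k + 1, r => ∑ m ∈ Finset.Icc r n, stirS1 n m * tnum m k r

/-- Composition `f(g(x))` of formal power series, for `g` with zero constant
term (so that `coeff d (g^m) = 0` for `m > d` and the sum below is the full
composition). -/
noncomputable def comp1 (f g : PowerSeries ℚ) : PowerSeries ℚ :=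
  PowerSeries.mk fun d => ∑ m ∈ Finset.range (d + 1),
    PowerSeries.coeff m f * PowerSeries.coeff d (g ^ m)

/-- Composition `f(g(x,y))` of a one-variable power series with a two-variable
power series `g` with zero constant term. -/
noncomputable def comp2 (f : PowerSeries ℚ) (g : MvPowerSeries (Fin 2) ℚ) :
    MvPowerSeries (Fin 2) ℚ :=
  fun e => ∑ m ∈ Finset.range (e 0 + e 1 + 1),
    PowerSeries.coeff m f * MvPowerSeries.coeff e (g ^ m)

/-- The embedding `ℚ[[x]] → ℚ[[x,y]]`, `x ↦ x` (the variable `0`). -/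
noncomputable def toX (f : PowerSeries ℚ) : MvPowerSeries (Fin 2) ℚ :=
  fun e => if e 1 = 0 then PowerSeries.coeff (e 0) f else 0

/-- `exp⁽⁰⁾(x) = eˣ - 1` and `exp⁽ᵏ⁾(x) = exp(exp⁽ᵏ⁻¹⁾(x)) - 1`. -/
noncomputable def expIter : ℕ → PowerSeries ℚ
  | 0 => PowerSeries.exp ℚ - 1
  | k + 1 => comp1 (PowerSeries.exp ℚ) (expIter k) - 1

/-- `exp⁽ᵏ⁾(x,y) = exp(y ⬝ exp⁽ᵏ⁻¹⁾(x))` in `ℚ[[x,y]]`, for `k ≥ 1`. -/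
noncomputable def expXY (k : ℕ) : MvPowerSeries (Fin 2) ℚ :=
  comp2 (PowerSeries.exp ℚ) (MvPowerSeries.X 1 * toX (expIter (k - 1)))

/-- The series `∑_{n,r ≥ 0} T(n,k,r) (xⁿ/n!) yʳ ∈ ℚ[[x,y]]`. -/
noncomputable def Tgen (k : ℕ) : MvPowerSeries (Fin 2) ℚ :=
  fun e => (Tnum (e 0) k (e 1) : ℚ) / (e 0).factorial

/-! Counting the maps `Fin n → Fin j` by their kernels gives `jⁿ = ∑ₘ S(n,m) j(j-1)⋯(j-m+1)`,
while `e^{jx} = ((eˣ - 1) + 1)ʲ` gives `jⁿ = ∑ₘ C(j,m) n! [xⁿ] (eˣ - 1)ᵐ`; inverting the binomial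
transform yields `n! [xⁿ] (eˣ - 1)ʳ = r! S(n,r)`. Reading `T(·,k,·)` as the `k`-th power of the
triangular matrix `S`, also `T(n,k+1,r) = ∑ₘ T(n,k,m) S(m,r)`, so substituting `exp⁽ᵏ⁻¹⁾` into
`(eˣ - 1)ʳ` gives by induction `r! T(n,k+1,r) = n! [xⁿ] (exp⁽ᵏ⁾)ʳ`, which up to `n! r!` is the
coefficient of `xⁿ yʳ` in `exp(y exp⁽ᵏ⁾(x))`. -/

instance Setoid.finite {α : Type*} [Finite α] : Finite (Setoid α) :=
  Finite.of_injective (fun p : Setoid α => ⇑p) fun _ _ h =>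
    Setoid.ext fun a b => iff_of_eq (congrFun₂ h a b)

def Setoid.kerEqEquivEmbedding {α β : Type*} (p : Setoid α) :
    {f : α → β // Setoid.ker f = p} ≃ (Quotient p ↪ β) where
  toFun f := ⟨Quotient.lift f.1 f.2.ge, (Setoid.lift_injective_iff_ker_eq_of_le _).2 f.2⟩
  invFun e := ⟨e ∘ Quotient.mk p, Setoid.ext fun _ _ => e.injective.eq_iff.trans Quotient.eq⟩
  left_inv _ := rfl
  right_inv e := by ext x; induction x using Quotient.ind; rfl

lemma Setoid.card_quotient_le {α : Type*} [Finite α] (p : Setoid α) :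
    Nat.card (Quotient p) ≤ Nat.card α :=
  Nat.card_le_card_of_surjective _ Quotient.mk_surjective

lemma stirS2_eq_zero_of_lt {n r : ℕ} (h : n < r) : stirS2 n r = 0 := by
  rw [stirS2, Nat.card_eq_zero]
  refine .inl ⟨fun ⟨p, hp⟩ => ?_⟩
  have := p.card_quotient_le
  rw [hp, Nat.card_fin] at this
  omega

lemma pow_eq_sum_stirS2_mul_descFactorial (n j : ℕ) :
    j ^ n = ∑ m ∈ range (n + 1), stirS2 n m * j.descFactorial m := by
  classical
  have : Fintype (Setoid (Fin n)) := Fintype.ofFinite _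
  calc j ^ n = Nat.card (Fin n → Fin j) := by simp
    _ = ∑ p : Setoid (Fin n), Nat.card (Quotient p ↪ Fin j) := by
      rw [← Nat.card_sigma]
      exact Nat.card_congr <| (Equiv.sigmaFiberEquiv Setoid.ker).symm.trans
        (Equiv.sigmaCongrRight Setoid.kerEqEquivEmbedding)
    _ = ∑ p : Setoid (Fin n), j.descFactorial (Nat.card (Quotient p)) := by
      refine sum_congr rfl fun p _ => ?_
      have : Fintype (Quotient p) := Fintype.ofFinite _
      rw [Nat.card_eq_fintype_card, Fintype.card_embedding_eq, Fintype.card_fin,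
        Nat.card_eq_fintype_card]
    _ = ∑ m ∈ range (n + 1), stirS2 n m * j.descFactorial m := by
      rw [← sum_fiberwise_of_maps_to (g := fun p : Setoid (Fin n) => Nat.card (Quotient p))
        (t := range (n + 1)) fun p _ => by simpa [Nat.lt_succ_iff] using p.card_quotient_le]
      refine sum_congr rfl fun m _ => ?_
      rw [sum_congr rfl fun p hp => by rw [(mem_filter.1 hp).2], sum_const, smul_eq_mul, stirS2,
        Nat.card_eq_fintype_card, Fintype.card_subtype]

lemma eq_of_sum_range_choose_smul_eq {M : Type*} [AddCancelCommMonoid M] {b s : ℕ → M}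
    (h : ∀ j, ∑ m ∈ range (j + 1), j.choose m • b m = ∑ m ∈ range (j + 1), j.choose m • s m) :
    b = s := by
  funext j
  induction j using Nat.strong_induction_on with
  | _ j ih =>
    have hj := h j
    rw [sum_range_succ, sum_range_succ, Nat.choose_self, one_smul, one_smul,
      sum_congr rfl fun m hm => by rw [ih m (mem_range.1 hm)]] at hj
    exact add_left_cancel hj

lemma Tnum_one (n r : ℕ) : Tnum n 1 r = stirS2 n r := by
  simp only [Tnum.eq_2, Tnum.eq_1, mul_ite, mul_one, mul_zero, sum_ite_eq', mem_Icc, le_refl,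
    true_and]
  split_ifs
  · rfl
  · exact (stirS2_eq_zero_of_lt (by omega)).symm

lemma Tnum_succ_eq_sum_Tnum_mul_stirS2 (k n r : ℕ) :
    Tnum n (k + 1) r = ∑ m ∈ Icc r n, Tnum n k m * stirS2 m r := by
  induction k generalizing n r with
  | zero =>
    simp only [zero_add, Tnum_one, Tnum.eq_1, ite_mul, one_mul, zero_mul, sum_ite_eq, mem_Icc,
      le_refl, and_true]
    split_ifs
    · rfl
    · exact stirS2_eq_zero_of_lt (by omega)
  | succ k ih =>
    calc Tnum n (k + 2) r
        = ∑ m ∈ Icc r n, ∑ p ∈ Icc r m, stirS2 n m * (Tnum m k p * stirS2 p r) := by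
          simp only [Tnum.eq_2 n r (k + 1), ih, mul_sum]
      _ = ∑ p ∈ Icc r n, ∑ m ∈ Icc p n, stirS2 n m * (Tnum m k p * stirS2 p r) :=
          sum_comm' fun m p => by simp only [mem_Icc]; omega
      _ = ∑ p ∈ Icc r n, Tnum n (k + 1) p * stirS2 p r := by
          simp only [Tnum.eq_2 n _ k, sum_mul, mul_assoc]

section PowerSeries

open PowerSeries Nat

lemma PowerSeries.coeff_pow_eq_zero_of_lt {R : Type*} [CommSemiring R] {g : R⟦X⟧}
    (hg : constantCoeff g = 0) {d m : ℕ} (h : d < m) : coeff d (g ^ m) = 0 :=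
  coeff_of_lt_order _ ((Nat.cast_lt.2 h).trans_le (le_order_pow_of_constantCoeff_eq_zero m hg))

lemma PowerSeries.coeff_subst_eq_sum_range {R : Type*} [CommRing R] {g : R⟦X⟧}
    (hg : constantCoeff g = 0) (f : R⟦X⟧) (d : ℕ) :
    coeff d (f.subst g) = ∑ m ∈ range (d + 1), coeff m f * coeff d (g ^ m) := by
  rw [coeff_subst' (.of_constantCoeff_zero' hg),
    finsum_eq_sum_of_support_subset (s := range (d + 1))]
  · simp only [smul_eq_mul]
  · intro m hm
    by_contra h
    exact hm (by simp [coeff_pow_eq_zero_of_lt hg (show d < m by simpa using h)])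

lemma comp1_eq_subst {g : ℚ⟦X⟧} (hg : constantCoeff g = 0) (f : ℚ⟦X⟧) :
    comp1 f g = f.subst g := by
  ext d
  rw [comp1, coeff_mk, coeff_subst_eq_sum_range hg]

lemma constantCoeff_expIter : ∀ k, constantCoeff (expIter k) = 0
  | 0 => by simp [expIter]
  | k + 1 => by
    rw [← coeff_zero_eq_constantCoeff_apply, expIter, map_sub, comp1, coeff_mk]
    simp

lemma expIter_succ (k : ℕ) : expIter (k + 1) = (exp ℚ - 1).subst (expIter k) := by
  have hE := HasSubst.of_constantCoeff_zero' (constantCoeff_expIter k)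
  rw [expIter, comp1_eq_subst (constantCoeff_expIter k), subst_sub hE, ← coe_substAlgHom hE,
    map_one]

lemma PowerSeries.factorial_mul_coeff_exp_pow {A : Type*} [CommRing A] [Algebra ℚ A] (n j : ℕ) :
    (n ! : A) * coeff n (exp A ^ j) = (j : A) ^ n := by
  rw [exp_pow_eq_rescale_exp, coeff_rescale, coeff_exp, ← map_natCast (algebraMap ℚ A) n !,
    ← map_natCast (algebraMap ℚ A) j, ← map_pow, ← map_mul, ← map_mul]
  congr 1
  field_simp

lemma sum_range_choose_mul_coeff_exp_sub_one_pow (n j : ℕ) :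
    ∑ m ∈ range (j + 1), (j.choose m : ℚ) * (n ! * coeff n ((exp ℚ - 1) ^ m)) = (j : ℚ) ^ n := by
  rw [← factorial_mul_coeff_exp_pow, show exp ℚ ^ j = (exp ℚ - 1 + 1) ^ j by rw [sub_add_cancel],
    add_pow, map_sum, mul_sum]
  refine sum_congr rfl fun m _ => ?_
  rw [one_pow, mul_one, ← map_natCast (C (R := ℚ)), coeff_mul_C]
  ring

lemma sum_range_choose_mul_factorial_mul_stirS2 (n j : ℕ) :
    ∑ m ∈ range (j + 1), j.choose m * (m ! * stirS2 n m) = j ^ n := by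
  calc ∑ m ∈ range (j + 1), j.choose m * (m ! * stirS2 n m)
      = ∑ m ∈ range (j + 1), stirS2 n m * j.descFactorial m :=
        sum_congr rfl fun m _ => by rw [descFactorial_eq_factorial_mul_choose]; ring
    _ = ∑ m ∈ range (n + j + 1), stirS2 n m * j.descFactorial m :=
        sum_subset (range_subset_range.2 (by omega)) fun m _ hm => by
          rw [descFactorial_eq_zero_iff_lt.2 (by simpa using hm), mul_zero]
    _ = ∑ m ∈ range (n + 1), stirS2 n m * j.descFactorial m :=
        (sum_subset (range_subset_range.2 (by omega)) fun m _ hm => by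
          rw [stirS2_eq_zero_of_lt (by simpa using hm), zero_mul]).symm
    _ = j ^ n := (pow_eq_sum_stirS2_mul_descFactorial n j).symm

theorem factorial_mul_coeff_exp_sub_one_pow (n r : ℕ) :
    (n ! : ℚ) * coeff n ((exp ℚ - 1) ^ r) = r ! * stirS2 n r :=
  congrFun (eq_of_sum_range_choose_smul_eq (b := fun m => (n ! : ℚ) * coeff n ((exp ℚ - 1) ^ m))
    (s := fun m => (m ! * stirS2 n m : ℚ)) fun j => by
      simp only [nsmul_eq_mul]
      rw [sum_range_choose_mul_coeff_exp_sub_one_pow]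
      exact_mod_cast (sum_range_choose_mul_factorial_mul_stirS2 n j).symm) r

theorem factorial_mul_Tnum_succ (k n r : ℕ) :
    (r ! : ℚ) * Tnum n (k + 1) r = n ! * coeff n (expIter k ^ r) := by
  induction k generalizing n r with
  | zero => rw [Tnum_one, expIter, factorial_mul_coeff_exp_sub_one_pow]
  | succ k ih =>
    have hE := constantCoeff_expIter k
    rw [expIter_succ, ← subst_pow (.of_constantCoeff_zero' hE), coeff_subst_eq_sum_range hE,
      Tnum_succ_eq_sum_Tnum_mul_stirS2]
    push_cast
    rw [mul_sum, mul_sum]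
    refine (sum_congr rfl fun m _ => ?_).trans (sum_subset (fun m hm => ?_) fun m _ hm => ?_)
    · linear_combination coeff m ((exp ℚ - 1) ^ r) * ih n m -
        (Tnum n (k + 1) m : ℚ) * factorial_mul_coeff_exp_sub_one_pow m r
    · simp only [mem_Icc, mem_range] at hm ⊢
      omega
    · have hm : m < r := by simp_all
      rw [coeff_pow_eq_zero_of_lt (by simp) hm, zero_mul, mul_zero]

lemma Finsupp.eq_single_zero_iff_of_fin_two {M : Type*} [Zero M] (e : Fin 2 →₀ M) :
    e = Finsupp.single 0 (e 0) ↔ e 1 = 0 := by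
  refine ⟨fun h => by rw [h]; simp, fun h => Finsupp.ext fun i => ?_⟩
  fin_cases i <;> simp [h]

lemma toX_eq_subst (f : ℚ⟦X⟧) : toX f = f.subst (MvPowerSeries.X 0) := by
  ext e
  rw [coeff_subst_single]
  simp only [Finsupp.eq_single_zero_iff_of_fin_two]
  rfl

lemma toX_pow (f : ℚ⟦X⟧) (m : ℕ) : toX (f ^ m) = toX f ^ m := by
  rw [toX_eq_subst, toX_eq_subst, subst_pow (HasSubst.X 0)]

lemma coeff_X_one_pow_mul_toX (f : ℚ⟦X⟧) (m : ℕ) (e : Fin 2 →₀ ℕ) :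
    MvPowerSeries.coeff e (MvPowerSeries.X 1 ^ m * toX f)
      = if e 1 = m then coeff (e 0) f else 0 := by
  rw [MvPowerSeries.X_pow_eq, MvPowerSeries.coeff_monomial_mul, one_mul]
  simp only [Finsupp.single_le_iff]
  show (if m ≤ e 1 then (if (e - _) 1 = 0 then _ else 0) else 0) = _
  simp only [Finsupp.tsub_apply, Finsupp.single_apply]
  split_ifs <;> first | rfl | omega

lemma coeff_Tgen (k : ℕ) (e : Fin 2 →₀ ℕ) :
    MvPowerSeries.coeff e (Tgen k) = Tnum (e 0) k (e 1) / (e 0)! :=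
  rfl

lemma coeff_expXY (k : ℕ) (e : Fin 2 →₀ ℕ) :
    MvPowerSeries.coeff e (expXY k)
      = coeff (e 0) (expIter (k - 1) ^ e 1) / (e 1)! := by
  show ∑ m ∈ range (e 0 + e 1 + 1), _ = _
  simp only [mul_pow, ← toX_pow, coeff_X_one_pow_mul_toX, mul_ite, mul_zero, sum_ite_eq,
    mem_range, coeff_exp]
  rw [if_pos (by omega)]
  simp [div_eq_inv_mul]

end PowerSeries

/-- For every `k ≥ 1`, `∑_{n,r ≥ 0} T(n,k,r) (xⁿ/n!) yʳ = exp⁽ᵏ⁾(x,y)`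
as formal power series in `ℚ[[x,y]]`. -/
theorem egf_T_eq_expXY (k : ℕ) (hk : 1 ≤ k) : Tgen k = expXY k := by
  obtain ⟨k, rfl⟩ := Nat.exists_eq_add_of_le' hk
  ext e
  rw [coeff_Tgen, coeff_expXY, Nat.add_sub_cancel, div_eq_div_iff (by positivity) (by positivity)]
  linear_combination factorial_mul_Tnum_succ k (e 0) (e 1)
end

section
/- For all k ≥ 1 and all integers n ≥ r ≥ 1, the numbers t(n,k,r) satisfy the recurrence t(n,k,r) = ∑_{p=0}^{n-r} C(n-1,p) · t(p+1,k,1) · t(n-p-1,k,r-1), where C(n-1,p) is the binomial coefficient and the conventions t(0,k,0) = t(1,k,1) = 1 are used. -/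
open Finset

lemma stirS1_zero (r : ℕ) : stirS1 0 r = if r = 0 then 1 else 0 := by
  simp [stirS1, Polynomial.coeff_one]

lemma stirS1_succ_succ (n r : ℕ) :
    stirS1 (n+1) (r+1) = stirS1 n r - n * stirS1 n (r+1) := by
  simp only [stirS1, Finset.prod_range_succ, mul_sub, Polynomial.coeff_sub,
    Polynomial.coeff_mul_X, Polynomial.coeff_mul_C]
  ring

lemma stirS1_succ_zero (n : ℕ) : stirS1 (n+1) 0 = -(n:ℤ) * stirS1 n 0 := by
  simp only [stirS1, Finset.prod_range_succ, mul_sub, Polynomial.coeff_sub,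
    Polynomial.mul_coeff_zero, Polynomial.coeff_X_zero, Polynomial.coeff_mul_C, mul_zero, Polynomial.coeff_C_zero]
  ring

lemma stirS1_zero_right (n : ℕ) : stirS1 (n+1) 0 = 0 := by
  induction n with
  | zero => rw [stirS1_succ_zero]; simp
  | succ n ih => rw [stirS1_succ_zero, ih, mul_zero]

lemma stirS1_eq_zero_of_lt {n r : ℕ} (h : n < r) : stirS1 n r = 0 := by
  apply Polynomial.coeff_eq_zero_of_natDegree_lt
  refine lt_of_le_of_lt ?_ h
  refine le_trans (Polynomial.natDegree_prod_le _ _) ?_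
  refine le_trans (Finset.sum_le_sum (g := fun _ => 1) (fun i _ => by
      simpa using Polynomial.natDegree_X_sub_C_le (i:ℤ))) ?_
  simp

lemma stirS1_one (r : ℕ) : stirS1 1 r = if r = 1 then 1 else 0 := by
  simp [stirS1, Polynomial.coeff_X, eq_comm]

noncomputable def SA (m a b : ℕ) : ℤ :=
  ∑ p ∈ range (m+1), (m.choose p : ℤ) * stirS1 (p+1) a * stirS1 (m-p) b

lemma SA_zero_left (m b : ℕ) : SA m 0 b = 0 := by
  unfold SA
  apply Finset.sum_eq_zero
  intro p _
  rw [stirS1_zero_right, mul_zero, zero_mul]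

lemma key : ∀ m a b, SA m (a+1) b = ((a+b).choose a : ℤ) * stirS1 (m+1) (a+b+1) := by
  intro m
  induction m with
  | zero =>
    intro a b
    have hsa : SA 0 (a+1) b = stirS1 1 (a+1) * stirS1 0 b := by
      simp [SA]
    rw [hsa, stirS1_one, stirS1_zero, stirS1_one]
    rcases a with _ | a <;> rcases b with _ | b <;> simp
  | succ m ih =>
    intro a b
    have hA0 : ∀ a, SA m a 0 = stirS1 (m+1) a := by
      intro a
      cases a with
      | zero => rw [SA_zero_left, stirS1_zero_right]
      | succ a =>
        rw [ih a 0]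
        simp [Nat.choose_self]
    -- the split
    have hsplit : SA (m+1) (a+1) b =
        (∑ p ∈ range (m+1), (m.choose p : ℤ) * stirS1 (p+2) (a+1) * stirS1 (m-p) b)
        + ∑ p ∈ range (m+1), (m.choose p : ℤ) * stirS1 (p+1) (a+1) * stirS1 (m+1-p) b := by
      have hQ2 : (∑ p ∈ range (m+1), (m.choose p : ℤ) * stirS1 (p+1) (a+1) * stirS1 (m+1-p) b)
          = (∑ p ∈ range (m+1), (m.choose (p+1) : ℤ) * stirS1 (p+2) (a+1) * stirS1 (m-p) b)
            + stirS1 1 (a+1) * stirS1 (m+1) b := by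
        rw [Finset.sum_range_succ'
          (f := fun p => (m.choose p : ℤ) * stirS1 (p+1) (a+1) * stirS1 (m+1-p) b)]
        rw [Finset.sum_range_succ
          (f := fun p => (m.choose (p+1) : ℤ) * stirS1 (p+2) (a+1) * stirS1 (m-p) b)]
        rw [Nat.choose_succ_self]
        have he : ∀ p ∈ range m,
            (m.choose (p+1) : ℤ) * stirS1 (p+1+1) (a+1) * stirS1 (m+1-(p+1)) b
            = (m.choose (p+1) : ℤ) * stirS1 (p+2) (a+1) * stirS1 (m-p) b := by
          intro p _
          have : m+1-(p+1) = m-p := by omega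
          rw [this]
        rw [Finset.sum_congr rfl he]
        simp only [Nat.choose_zero_right, Nat.cast_one, Nat.cast_zero]
        push_cast
        ring
      rw [hQ2]
      unfold SA
      rw [Finset.sum_range_succ'
        (f := fun p => ((m+1).choose p : ℤ) * stirS1 (p+1) (a+1) * stirS1 (m+1-p) b)]
      have he2 : ∀ p ∈ range (m+1),
          ((m+1).choose (p+1) : ℤ) * stirS1 (p+1+1) (a+1) * stirS1 (m+1-(p+1)) b
          = (m.choose p : ℤ) * stirS1 (p+2) (a+1) * stirS1 (m-p) b
            + (m.choose (p+1) : ℤ) * stirS1 (p+2) (a+1) * stirS1 (m-p) b := by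
        intro p _
        have h3 : m+1-(p+1) = m-p := by omega
        rw [h3, Nat.choose_succ_succ]
        push_cast
        ring
      rw [Finset.sum_congr rfl he2, Finset.sum_add_distrib]
      simp only [Nat.choose_zero_right, Nat.cast_one, one_mul, Nat.sub_zero]
      push_cast
      ring
    have hS1 : (∑ p ∈ range (m+1), (m.choose p : ℤ) * stirS1 (p+2) (a+1) * stirS1 (m-p) b)
        = SA m a b - (∑ p ∈ range (m+1),
            ((p:ℤ)+1) * ((m.choose p : ℤ) * stirS1 (p+1) (a+1) * stirS1 (m-p) b)) := by
      unfold SA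
      rw [← Finset.sum_sub_distrib]
      apply Finset.sum_congr rfl
      intro p _
      rw [show p+2 = (p+1)+1 from rfl, stirS1_succ_succ]
      push_cast
      ring
    rcases b with _ | b'
    · -- b = 0
      have hS2 : (∑ p ∈ range (m+1), (m.choose p : ℤ) * stirS1 (p+1) (a+1) * stirS1 (m+1-p) 0)
          = - ∑ p ∈ range (m+1),
              ((m:ℤ)-p) * ((m.choose p : ℤ) * stirS1 (p+1) (a+1) * stirS1 (m-p) 0) := by
        rw [← Finset.sum_neg_distrib]
        apply Finset.sum_congr rfl
        intro p hp
        have hple : p ≤ m := Nat.lt_succ_iff.mp (Finset.mem_range.mp hp)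
        have h2 : m+1-p = (m-p)+1 := by omega
        rw [h2, stirS1_succ_zero]
        have : ((m-p : ℕ) : ℤ) = (m:ℤ) - p := by omega
        rw [this]
        ring
      have hcomb : (∑ p ∈ range (m+1),
            ((p:ℤ)+1) * ((m.choose p : ℤ) * stirS1 (p+1) (a+1) * stirS1 (m-p) 0))
          + (∑ p ∈ range (m+1),
            ((m:ℤ)-p) * ((m.choose p : ℤ) * stirS1 (p+1) (a+1) * stirS1 (m-p) 0))
          = ((m:ℤ)+1) * SA m (a+1) 0 := by
        unfold SA
        rw [Finset.mul_sum, ← Finset.sum_add_distrib]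
        apply Finset.sum_congr rfl
        intro p _
        ring
      rw [hsplit, hS1, hS2, hA0 a]
      rw [hA0 (a+1)] at hcomb
      have hR : stirS1 (m+1+1) (a+0+1) = stirS1 (m+1) a - ((m:ℤ)+1) * stirS1 (m+1) (a+1) := by
        rw [show a+0+1 = a+1 from by omega, stirS1_succ_succ]
        push_cast; ring
      rw [hR, show (a+0).choose a = 1 from by simp]
      push_cast
      linear_combination (-1 : ℤ) * hcomb
    · -- b = b'+1
      have hS2 : (∑ p ∈ range (m+1),
            (m.choose p : ℤ) * stirS1 (p+1) (a+1) * stirS1 (m+1-p) (b'+1))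
          = SA m (a+1) b' - ∑ p ∈ range (m+1),
              ((m:ℤ)-p) * ((m.choose p : ℤ) * stirS1 (p+1) (a+1) * stirS1 (m-p) (b'+1)) := by
        unfold SA
        rw [← Finset.sum_sub_distrib]
        apply Finset.sum_congr rfl
        intro p hp
        have hple : p ≤ m := Nat.lt_succ_iff.mp (Finset.mem_range.mp hp)
        have h2 : m+1-p = (m-p)+1 := by omega
        rw [h2, stirS1_succ_succ (m-p) b']
        have : ((m-p : ℕ) : ℤ) = (m:ℤ) - p := by omega
        rw [this]
        ring
      have hcomb : (∑ p ∈ range (m+1),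
            ((p:ℤ)+1) * ((m.choose p : ℤ) * stirS1 (p+1) (a+1) * stirS1 (m-p) (b'+1)))
          + (∑ p ∈ range (m+1),
            ((m:ℤ)-p) * ((m.choose p : ℤ) * stirS1 (p+1) (a+1) * stirS1 (m-p) (b'+1)))
          = ((m:ℤ)+1) * SA m (a+1) (b'+1) := by
        unfold SA
        rw [Finset.mul_sum, ← Finset.sum_add_distrib]
        apply Finset.sum_congr rfl
        intro p _
        ring
      rw [hsplit, hS1, hS2]
      rw [ih a (b'+1)] at hcomb
      rw [ih a b']
      have hR : stirS1 (m+1+1) (a+(b'+1)+1)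
          = stirS1 (m+1) (a+b'+1) - ((m:ℤ)+1) * stirS1 (m+1) (a+(b'+1)+1) := by
        rw [show a+(b'+1)+1 = (a+b'+1)+1 from by omega, stirS1_succ_succ]
        push_cast; ring
      rw [hR]
      have hidx : a+(b'+1)+1 = a+b'+1+1 := by omega
      rw [hidx] at hcomb
      rcases a with _ | a''
      · rw [SA_zero_left]
        simp only [Nat.zero_add, Nat.choose_zero_right, Nat.cast_one] at *
        push_cast
        linear_combination (-1 : ℤ) * hcomb
      · rw [ih a'' (b'+1)]
        have e1 : a''+1+(b'+1) = a''+b'+1+1 := by omega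
        have e2 : a''+1+b'+1 = a''+b'+1+1 := by omega
        have e3 : a''+1+b' = a''+b'+1 := by omega
        have e4 : a''+(b'+1) = a''+b'+1 := by omega
        simp only [e1, e2, e3, e4] at hcomb hR ⊢
        have hch : ((a''+b'+1).choose (a''+1) : ℤ) + ((a''+b'+1).choose a'' : ℤ)
            = ((a''+b'+1+1).choose (a''+1) : ℤ) := by
          rw [Nat.choose_succ_succ (a''+b'+1) a'']
          push_cast; ring
        push_cast
        linear_combination (-1 : ℤ) * hcomb + stirS1 (m+1) (a''+b'+1+1) * hch


lemma key' {n : ℕ} (hn : 1 ≤ n) (a b : ℕ) :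
    ∑ p ∈ range n, ((n-1).choose p : ℤ) * stirS1 (p+1) (a+1) * stirS1 (n-p-1) b
      = ((a+b).choose a : ℤ) * stirS1 n (a+b+1) := by
  obtain ⟨m, rfl⟩ : ∃ m, n = m + 1 := ⟨n - 1, by omega⟩
  have h : ∑ p ∈ range (m+1), ((m+1-1).choose p : ℤ) * stirS1 (p+1) (a+1) * stirS1 (m+1-p-1) b
      = SA m (a+1) b := by
    simp only [SA]
    apply Finset.sum_congr rfl
    intro p hp
    have h1 : m + 1 - 1 = m := by omega
    have h2 : m + 1 - p - 1 = m - p := by omega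
    rw [h1, h2]
  rw [h, key m a b]

lemma tnum_eq_zero {n r : ℕ} (k : ℕ) (h : n < r) : tnum n k r = 0 := by
  cases k with
  | zero => simp only [tnum]; simp [Nat.ne_of_lt h]
  | succ k => simp only [tnum]; rw [Finset.Icc_eq_empty_of_lt h, Finset.sum_empty]

lemma main_aux : ∀ k n r : ℕ, 1 ≤ r → r ≤ n →
    tnum n k r = ∑ p ∈ Finset.range (n - r + 1),
      ((n - 1).choose p : ℤ) * tnum (p + 1) k 1 * tnum (n - p - 1) k (r - 1) := by
  intro k
  induction k with
  | zero =>
    intro n r hr hrn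
    rw [Finset.sum_eq_single 0]
    · simp only [tnum]
      have h1 : (0:ℕ) + 1 = 1 := rfl
      simp only [h1, if_pos rfl, Nat.choose_zero_right, Nat.cast_one, mul_one, one_mul,
        Nat.sub_zero]
      split_ifs <;> first | rfl | omega | (exfalso; omega)
    · intro p hp hp0
      have : ¬ (p + 1 = 1) := by omega
      simp only [tnum]
      rw [if_neg this]
      ring
    · intro h0
      exact absurd (Finset.mem_range.mpr (by omega)) h0
  | succ k ih =>
    intro n r hr hrn
    set F : ℤ := ∑ a ∈ range n, ∑ b ∈ range (n+1),
      tnum (a+1) k 1 * tnum b k (r-1) * (((a+b).choose a : ℕ) : ℤ) * stirS1 n (a+b+1)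
      with hF
    have hLHS : tnum n (k+1) r = F := by
      have h1 : tnum n (k+1) r = ∑ m ∈ Finset.Icc r n, stirS1 n m * tnum m k r := by
        simp only [tnum]
      have h2 : tnum n (k+1) r = ∑ m ∈ Finset.Icc r n, ∑ q ∈ range (m - r + 1),
          stirS1 n m * (((m - 1).choose q : ℤ) * tnum (q + 1) k 1 * tnum (m - q - 1) k (r - 1)) := by
        rw [h1]
        refine Finset.sum_congr rfl fun m hm => ?_
        rw [ih m r hr (Finset.mem_Icc.mp hm).1, Finset.mul_sum]
      have hF2 : F = ∑ x ∈ (range n ×ˢ range (n+1)).filter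
          (fun x : ℕ × ℕ => r ≤ x.2 + 1 ∧ x.1 + x.2 + 1 ≤ n),
          tnum (x.1+1) k 1 * tnum x.2 k (r-1) * (((x.1+x.2).choose x.1 : ℕ) : ℤ)
            * stirS1 n (x.1+x.2+1) := by
        rw [hF, ← Finset.sum_product']
        rw [Finset.sum_filter_of_ne]
        intro x hx hne
        constructor
        · by_contra hc
          exact hne (by rw [tnum_eq_zero k (by omega : x.2 < r - 1)]; ring)
        · by_contra hc
          exact hne (by rw [stirS1_eq_zero_of_lt (by omega : n < x.1 + x.2 + 1)]; ring)
      rw [h2, hF2, Finset.sum_sigma']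
      refine Finset.sum_nbij' (fun x => (x.2, x.1 - x.2 - 1)) (fun y => ⟨y.1 + y.2 + 1, y.1⟩)
        ?_ ?_ ?_ ?_ ?_
      · rintro ⟨m, q⟩ hx
        simp only [Finset.mem_sigma, Finset.mem_Icc, Finset.mem_range] at hx
        simp only [Finset.mem_filter, Finset.mem_product, Finset.mem_range]
        omega
      · rintro ⟨a, b⟩ hy
        simp only [Finset.mem_filter, Finset.mem_product, Finset.mem_range] at hy
        simp only [Finset.mem_sigma, Finset.mem_Icc, Finset.mem_range]
        omega
      · rintro ⟨m, q⟩ hx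
        simp only [Finset.mem_sigma, Finset.mem_Icc, Finset.mem_range] at hx
        have e1 : q + (m - q - 1) + 1 = m := by omega
        simp only [Sigma.mk.inj_iff, e1, heq_eq_eq, and_true]
      · rintro ⟨a, b⟩ hy
        simp only [Finset.mem_filter, Finset.mem_product, Finset.mem_range] at hy
        have e1 : a + b + 1 - a - 1 = b := by omega
        exact congrArg (fun z => (a, z)) e1
      · rintro ⟨m, q⟩ hx
        simp only [Finset.mem_sigma, Finset.mem_Icc, Finset.mem_range] at hx
        have e1 : q + (m - q - 1) = m - 1 := by omega
        have e2 : m - 1 + 1 = m := by omega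
        simp only [e1, e2]
        ring
    have e1 : ∀ p ∈ range (n - r + 1), tnum (p+1) (k+1) 1
        = ∑ a ∈ range n, stirS1 (p+1) (a+1) * tnum (a+1) k 1 := by
      intro p hp
      have hp' : p + 1 ≤ n := by
        have := Finset.mem_range.mp hp; omega
      have h1 : tnum (p+1) (k+1) 1 = ∑ a ∈ Finset.Icc 1 (p+1), stirS1 (p+1) a * tnum a k 1 := by
        simp only [tnum]
      rw [h1]
      have h2 : ∑ a ∈ Finset.Icc 1 (p+1), stirS1 (p+1) a * tnum a k 1
          = ∑ a ∈ Finset.Icc 1 n, stirS1 (p+1) a * tnum a k 1 := by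
        apply Finset.sum_subset (Finset.Icc_subset_Icc_right hp')
        intro a ha hna
        simp only [Finset.mem_Icc] at ha hna
        rw [stirS1_eq_zero_of_lt (by omega : p + 1 < a), zero_mul]
      rw [h2, ← Finset.Ico_add_one_right_eq_Icc, Finset.sum_Ico_eq_sum_range]
      exact Finset.sum_congr (congrArg range (by omega)) fun a _ => by rw [Nat.add_comm 1 a]
    have e2 : ∀ p ∈ range (n - r + 1), tnum (n-p-1) (k+1) (r-1)
        = ∑ b ∈ range (n+1), stirS1 (n-p-1) b * tnum b k (r-1) := by
      intro p hp
      have h1 : tnum (n-p-1) (k+1) (r-1)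
          = ∑ b ∈ Finset.Icc (r-1) (n-p-1), stirS1 (n-p-1) b * tnum b k (r-1) := by
        simp only [tnum]
      rw [h1]
      apply Finset.sum_subset
      · intro b hb
        simp only [Finset.mem_Icc] at hb
        exact Finset.mem_range.mpr (by omega)
      · intro b hb hnb
        simp only [Finset.mem_range] at hb
        simp only [Finset.mem_Icc] at hnb
        by_cases hcb : b < r - 1
        · rw [tnum_eq_zero k hcb, mul_zero]
        · rw [stirS1_eq_zero_of_lt (by omega : n - p - 1 < b), zero_mul]
    have hstep : (∑ p ∈ Finset.range (n - r + 1),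
        ((n - 1).choose p : ℤ) * tnum (p + 1) (k+1) 1 * tnum (n - p - 1) (k+1) (r - 1))
        = ∑ p ∈ range (n - r + 1), ∑ a ∈ range n, ∑ b ∈ range (n+1),
          ((n - 1).choose p : ℤ) * (stirS1 (p+1) (a+1) * tnum (a+1) k 1)
            * (stirS1 (n-p-1) b * tnum b k (r-1)) := by
      refine Finset.sum_congr rfl fun p hp => ?_
      rw [e1 p hp, e2 p hp, mul_assoc, Finset.sum_mul_sum, Finset.mul_sum]
      refine Finset.sum_congr rfl fun a _ => ?_
      rw [Finset.mul_sum]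
      refine Finset.sum_congr rfl fun b _ => ?_
      ring
    have hRHS : (∑ p ∈ Finset.range (n - r + 1),
        ((n - 1).choose p : ℤ) * tnum (p + 1) (k+1) 1 * tnum (n - p - 1) (k+1) (r - 1)) = F := by
      rw [hstep, Finset.sum_comm]
      refine Finset.sum_congr rfl fun a ha => ?_
      rw [Finset.sum_comm]
      refine Finset.sum_congr rfl fun b hb => ?_
      by_cases hT : tnum b k (r-1) = 0
      · rw [Finset.sum_eq_zero fun p _ => by rw [hT]; ring, hT]
        ring
      · have hbr : r - 1 ≤ b := by
          by_contra hc
          exact hT (tnum_eq_zero k (by omega))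
        have hext : ∑ p ∈ range (n - r + 1),
            ((n - 1).choose p : ℤ) * (stirS1 (p+1) (a+1) * tnum (a+1) k 1)
              * (stirS1 (n-p-1) b * tnum b k (r-1))
            = ∑ p ∈ range n,
            ((n - 1).choose p : ℤ) * (stirS1 (p+1) (a+1) * tnum (a+1) k 1)
              * (stirS1 (n-p-1) b * tnum b k (r-1)) := by
          apply Finset.sum_subset (Finset.range_subset_range.mpr (by omega))
          intro p hp hnp
          have hp1 : p < n := Finset.mem_range.mp hp
          have hp2 : ¬ p < n - r + 1 := fun h => hnp (Finset.mem_range.mpr h)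
          rw [stirS1_eq_zero_of_lt (show n - p - 1 < b by omega)]
          ring
        rw [hext]
        have hfac : ∑ p ∈ range n,
            ((n - 1).choose p : ℤ) * (stirS1 (p+1) (a+1) * tnum (a+1) k 1)
              * (stirS1 (n-p-1) b * tnum b k (r-1))
            = (∑ p ∈ range n, ((n - 1).choose p : ℤ) * stirS1 (p+1) (a+1) * stirS1 (n-p-1) b)
              * (tnum (a+1) k 1 * tnum b k (r-1)) := by
          rw [Finset.sum_mul]
          exact Finset.sum_congr rfl fun p _ => by ring
        rw [hfac, key' (by omega : 1 ≤ n) a b]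
        ring
    rw [hLHS, hRHS]

/-- For `k ≥ 1` and `n ≥ r ≥ 1`:
`t(n,k,r) = ∑_{p=0}^{n-r} C(n-1,p) ⬝ t(p+1,k,1) ⬝ t(n-p-1,k,r-1)`
(with the conventions `t(0,k,0) = t(1,k,1) = 1`, which hold for `tnum`). -/
theorem t_recurrence (n k r : ℕ) (hk : 1 ≤ k) (hr : 1 ≤ r) (hrn : r ≤ n) :
    tnum n k r = ∑ p ∈ Finset.range (n - r + 1),
      (Nat.choose (n - 1) p : ℤ) * tnum (p + 1) k 1 * tnum (n - p - 1) k (r - 1) := by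
  exact main_aux k n r hr hrn
end
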